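/- Let α₁ ∈ ℝ, α₂ > 0, ε > 0 and β ≥ 0. Then the polynomial Q has no real roots. -/

import Mathlib

/-!
On the real axis the imaginary part of `Q` is `-4α₂x(x² - 1)/(β + ε)`, so a real root can only
be `0` or `±1`. But `Q 0 = 1`, and for `x = ±1` the real part is `8(4 + ε + x(2 + ε))/(β + ε)`,
which is `16(3 + ε)/(β + ε)` or `16/(β + ε)`; both are positive.
-/

/-- The quartic `Q(z) = z⁴ + (4z/(β+ε))·[(2+ε)(z²+1) + (α₁ − iα₂)(z²−1)]
+ 2((16−β+3ε)/(β+ε))z² + 1`. -/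
noncomputable def Q (a1 a2 e b : ℝ) (z : ℂ) : ℂ :=
  z ^ 4
    + (4 * z / ((b : ℂ) + (e : ℂ)))
        * (((2 : ℂ) + (e : ℂ)) * (z ^ 2 + 1) + ((a1 : ℂ) - Complex.I * (a2 : ℂ)) * (z ^ 2 - 1))
    + 2 * (((16 : ℂ) - (b : ℂ) + 3 * (e : ℂ)) / ((b : ℂ) + (e : ℂ))) * z ^ 2 + 1

namespace Q

variable (a1 a2 e b x : ℝ)

theorem ofReal_eq :
    Q a1 a2 e b x =
      ((x ^ 4 + 4 * x * ((2 + e) * (x ^ 2 + 1) + a1 * (x ^ 2 - 1)) / (b + e)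
          + 2 * ((16 - b + 3 * e) / (b + e)) * x ^ 2 + 1 : ℝ) : ℂ)
        + ((-(4 * a2 * x * (x ^ 2 - 1) / (b + e)) : ℝ) : ℂ) * Complex.I := by
  unfold Q
  push_cast
  ring

theorem ofReal_im : (Q a1 a2 e b x).im = -(4 * a2 * x * (x ^ 2 - 1) / (b + e)) := by
  rw [ofReal_eq]
  simp only [Complex.add_im, Complex.ofReal_im, Complex.im_ofReal_mul, Complex.I_im]
  ring

theorem ofReal_re :
    (Q a1 a2 e b x).re = x ^ 4 + 4 * x * ((2 + e) * (x ^ 2 + 1) + a1 * (x ^ 2 - 1)) / (b + e)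
      + 2 * ((16 - b + 3 * e) / (b + e)) * x ^ 2 + 1 := by
  rw [ofReal_eq]
  simp only [Complex.add_re, Complex.ofReal_re, Complex.re_ofReal_mul, Complex.I_re]
  ring

theorem apply_zero : Q a1 a2 e b 0 = 1 := by
  simp [Q]

theorem ofReal_re_of_sq_eq_one {x : ℝ} (hx : x ^ 2 = 1) (hbe : b + e ≠ 0) :
    (Q a1 a2 e b x).re = 8 * (4 + e + x * (2 + e)) / (b + e) := by
  rw [ofReal_re, show x ^ 4 = (x ^ 2) ^ 2 by ring, hx]
  field_simp
  ring

end Q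

/-- For `α₂ > 0`, `ε > 0`, `β ≥ 0`, the polynomial `Q` has no real roots. -/
theorem stmt_9 (a1 a2 e b : ℝ) (ha2 : 0 < a2) (he : 0 < e) (hb : 0 ≤ b) :
    ∀ x : ℝ, Q a1 a2 e b (x : ℂ) ≠ 0 := by
  intro x hx
  have hbe : 0 < b + e := by linarith
  have him : a2 * (x * (x ^ 2 - 1)) = 0 := by
    have := congrArg Complex.im hx
    rw [Q.ofReal_im, Complex.zero_im, neg_eq_zero, div_eq_zero_iff] at this
    rcases this with h | h
    · linear_combination h / 4
    · exact absurd h hbe.ne'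
  rcases mul_eq_zero.1 (mul_eq_zero.1 him |>.resolve_left ha2.ne') with rfl | hx2
  · simp [Q.apply_zero] at hx
  · have hre := congrArg Complex.re hx
    rw [Q.ofReal_re_of_sq_eq_one a1 a2 e b (by linarith) hbe.ne', Complex.zero_re,
      div_eq_zero_iff] at hre
    have hx_ge : -1 ≤ x := by nlinarith
    rcases hre with h | h
    · nlinarith
    · exact hbe.ne' h
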